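/- arXiv:1509.02223 — 3 statements merged into one kernel-verified Lean document; each statement's English description precedes it below -/
import Mathlib

section
/- Let U be a Banach space, F a normed space, A : U → F a continuous, injective linear operator, and let ū ∈ U be the exact solution of A ū = f. Let (fₙ) be a sequence in F with ‖fₙ − f‖ ≤ δₙ and δₙ → 0. Let R : U → ℝ be lower semicontinuous, bounded below, with sequentially compact sublevel sets {u : R(u) ≤ C}. Suppose uₙ ∈ U satisfies ‖A uₙ − fₙ‖ ≤ δₙ and R(uₙ) ≤ R(ū) for all n. Then uₙ → ū strongly in U and R(uₙ) → R(ū). -/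
theorem stmt_3 {U F : Type*} [NormedAddCommGroup U] [NormedSpace ℝ U] [CompleteSpace U]
    [NormedAddCommGroup F] [NormedSpace ℝ F]
    (A : U →L[ℝ] F) (hA : Function.Injective A)
    (ubar : U) (f : F) (hAu : A ubar = f)
    (fn : ℕ → F) (δ : ℕ → ℝ) (hδ : ∀ n, ‖fn n - f‖ ≤ δ n)
    (hδ0 : Filter.Tendsto δ Filter.atTop (nhds 0))
    (R : U → ℝ) (hlsc : LowerSemicontinuous R) (hbdd : BddBelow (Set.range R))
    (hcpt : ∀ C : ℝ, IsSeqCompact {u : U | R u ≤ C})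
    (un : ℕ → U) (hres : ∀ n, ‖A (un n) - fn n‖ ≤ δ n)
    (hRle : ∀ n, R (un n) ≤ R ubar) :
    Filter.Tendsto un Filter.atTop (nhds ubar) ∧
      Filter.Tendsto (fun n => R (un n)) Filter.atTop (nhds (R ubar)) := by
  -- A (un n) → f
  have hAun : Filter.Tendsto (fun n => A (un n)) Filter.atTop (nhds f) := by
    rw [← tendsto_sub_nhds_zero_iff]
    have h2 : Filter.Tendsto (fun n => δ n + δ n) Filter.atTop (nhds 0) := by
      simpa using hδ0.add hδ0
    refine squeeze_zero_norm (fun n => ?_) h2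
    calc ‖A (un n) - f‖ = ‖(A (un n) - fn n) + (fn n - f)‖ := by rw [sub_add_sub_cancel]
      _ ≤ ‖A (un n) - fn n‖ + ‖fn n - f‖ := norm_add_le _ _
      _ ≤ δ n + δ n := add_le_add (hres n) (hδ n)
  have hmain : Filter.Tendsto un Filter.atTop (nhds ubar) := by
    apply Filter.tendsto_of_subseq_tendsto
    intro ns hns
    obtain ⟨a, ha, φ, hφ, hconv⟩ := hcpt (R ubar) (x := fun n => un (ns n))
      (fun n => hRle (ns n))
    have hAa : Filter.Tendsto (fun n => A (un (ns (φ n)))) Filter.atTop (nhds (A a)) :=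
      (A.continuous.tendsto a).comp hconv
    have hAf : Filter.Tendsto (fun n => A (un (ns (φ n)))) Filter.atTop (nhds f) :=
      hAun.comp (hns.comp hφ.tendsto_atTop)
    have : a = ubar := hA (by rw [hAu]; exact tendsto_nhds_unique hAa hAf)
    exact ⟨φ, this ▸ hconv⟩
  refine ⟨hmain, ?_⟩
  rw [tendsto_order]
  constructor
  · intro b hb
    exact (hmain.eventually (hlsc ubar b hb)).mono fun n h => h
  · intro b hb
    exact Filter.Eventually.of_forall fun n => lt_of_le_of_lt (hRle n) hb
end

section
/- Let U be a Banach space, F a normed space, A : U → F continuous, injective, and linear, with A ū = f. Let R : U → ℝ be bounded below, weakly lower semicontinuous, with weakly sequentially compact sublevel sets, and possess the Radon–Riesz property (weak convergence uₙ ⇀ u₀ together with R(uₙ) → R(u₀) implies strong convergence uₙ → u₀). If uₙ satisfies ‖A uₙ − f‖ → 0 and R(uₙ) ≤ R(ū) for all n, then uₙ → ū strongly and R(uₙ) → R(ū). -/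
/-- Weak convergence of a sequence in a normed space: convergence against every
continuous linear functional. -/
def WeakConv {U : Type*} [NormedAddCommGroup U] [NormedSpace ℝ U]
    (un : ℕ → U) (u : U) : Prop :=
  ∀ φ : U →L[ℝ] ℝ, Filter.Tendsto (fun n => φ (un n)) Filter.atTop (nhds (φ u))

theorem stmt_4 {U F : Type*} [NormedAddCommGroup U] [NormedSpace ℝ U] [CompleteSpace U]
    [NormedAddCommGroup F] [NormedSpace ℝ F]
    (A : U →L[ℝ] F) (hA : Function.Injective A)
    (ubar : U) (f : F) (hAu : A ubar = f)
    (R : U → ℝ) (hbdd : BddBelow (Set.range R))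
    -- weak lower semicontinuity (along sequences)
    (hwlsc : ∀ (un : ℕ → U) (u : U), WeakConv un u →
      R u ≤ Filter.liminf (fun n => R (un n)) Filter.atTop)
    -- weak sequential compactness of sublevel sets
    (hcpt : ∀ C : ℝ, ∀ un : ℕ → U, (∀ n, R (un n) ≤ C) →
      ∃ (u₀ : U) (φ : ℕ → ℕ), R u₀ ≤ C ∧ StrictMono φ ∧ WeakConv (un ∘ φ) u₀)
    -- Radon–Riesz property
    (hRR : ∀ (un : ℕ → U) (u₀ : U), WeakConv un u₀ →
      Filter.Tendsto (fun n => R (un n)) Filter.atTop (nhds (R u₀)) →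
      Filter.Tendsto un Filter.atTop (nhds u₀))
    (un : ℕ → U)
    (hres : Filter.Tendsto (fun n => ‖A (un n) - f‖) Filter.atTop (nhds 0))
    (hRle : ∀ n, R (un n) ≤ R ubar) :
    Filter.Tendsto un Filter.atTop (nhds ubar) ∧
      Filter.Tendsto (fun n => R (un n)) Filter.atTop (nhds (R ubar)) := by
  obtain ⟨c, hc⟩ := hbdd
  -- strong convergence A uₙ → f
  have hAf : Filter.Tendsto (fun n => A (un n)) Filter.atTop (nhds f) := by
    rw [← tendsto_sub_nhds_zero_iff]
    exact (tendsto_zero_iff_norm_tendsto_zero).2 hres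
  -- key subsequence lemma
  have key : ∀ ns : ℕ → ℕ, Filter.Tendsto ns Filter.atTop Filter.atTop →
      ∃ ms : ℕ → ℕ,
        Filter.Tendsto (fun n => un (ns (ms n))) Filter.atTop (nhds ubar) ∧
        Filter.Tendsto (fun n => R (un (ns (ms n)))) Filter.atTop (nhds (R ubar)) := by
    intro ns hns
    obtain ⟨u₀, φ, hu₀le, hφ, hweak⟩ := hcpt (R ubar) (fun n => un (ns n))
      (fun n => hRle (ns n))
    have hφtop : Filter.Tendsto (fun n => ns (φ n)) Filter.atTop Filter.atTop :=
      hns.comp hφ.tendsto_atTop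
    -- A u₀ = f
    have hAu₀ : A u₀ = f := by
      rw [NormedSpace.eq_iff_forall_dual_eq ℝ]
      intro ψ
      have h1 : Filter.Tendsto (fun n => ψ (A (un (ns (φ n))))) Filter.atTop
          (nhds (ψ (A u₀))) := hweak (ψ.comp A)
      have h2 : Filter.Tendsto (fun n => ψ (A (un (ns (φ n))))) Filter.atTop
          (nhds (ψ f)) := (ψ.continuous.tendsto f).comp (hAf.comp hφtop)
      exact tendsto_nhds_unique h1 h2
    have hu₀ : u₀ = ubar := hA (hAu₀.trans hAu.symm)
    rw [hu₀] at hweak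
    -- R convergence along the subsubsequence
    set v : ℕ → ℝ := fun n => R (un (ns (φ n))) with hv
    have hub : ∀ n, v n ≤ R ubar := fun n => hRle _
    have hlb : ∀ n, c ≤ v n := fun n => hc (Set.mem_range_self _)
    have hbu : Filter.IsBoundedUnder (· ≤ ·) Filter.atTop v :=
      ⟨R ubar, Filter.eventually_map.2 (Filter.Eventually.of_forall hub)⟩
    have hbl : Filter.IsBoundedUnder (· ≥ ·) Filter.atTop v :=
      ⟨c, Filter.eventually_map.2 (Filter.Eventually.of_forall hlb)⟩
    have hliminf : R ubar ≤ Filter.liminf v Filter.atTop := hwlsc _ _ hweak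
    have hlimsup : Filter.limsup v Filter.atTop ≤ R ubar :=
      Filter.limsup_le_of_le (hbl.isCoboundedUnder_le) (Filter.Eventually.of_forall hub)
    have hRtend : Filter.Tendsto v Filter.atTop (nhds (R ubar)) :=
      tendsto_of_le_liminf_of_limsup_le hliminf hlimsup hbu hbl
    refine ⟨φ, ?_, hRtend⟩
    exact hRR (fun n => un (ns (φ n))) ubar hweak hRtend
  constructor
  · exact Filter.tendsto_of_subseq_tendsto fun ns hns => (key ns hns).imp fun ms h => h.1
  · exact Filter.tendsto_of_subseq_tendsto fun ns hns => (key ns hns).imp fun ms h => h.2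
end

section
/- The space of symmetric 2×2 real matrices with the positive semidefinite (Loewner) order is not a lattice: there exist symmetric matrices A and B having no least upper bound with respect to this order. -/
/-!
Take `A = diag(1, 0)` and `B = diag(0, 1)`. The identity is an upper bound of both, and comparing
entries shows that it is the only upper bound `C` with `C ≤ 1`; so a least upper bound would have
to be `1`. But `E = !![2, 6/5; 6/5, 2]` is also an upper bound, and `E - 1` has negative
determinant, so `1 ≤ E` fails.
-/

open Matrix

lemma Matrix.sub_fin_two {α : Type*} [Sub α] (a b c d a' b' c' d' : α) :
    !![a, b; c, d] - !![a', b'; c', d'] = !![a - a', b - b'; c - c', d - d'] := by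
  ext i j
  fin_cases i <;> fin_cases j <;> rfl

lemma Matrix.isSymm_fin_two {α : Type*} (a b d : α) :
    (!![a, b; b, d] : Matrix (Fin 2) (Fin 2) α).IsSymm := by
  ext i j
  fin_cases i <;> fin_cases j <;> rfl

lemma Matrix.IsSymm.eq_fin_two {α : Type*} {C : Matrix (Fin 2) (Fin 2) α} (hC : C.IsSymm) :
    C = !![C 0 0, C 0 1; C 0 1, C 1 1] := by
  nth_rewrite 1 [eta_fin_two C]
  rw [hC.apply 0 1]

lemma Matrix.posSemidef_fin_two_iff {a b d : ℝ} :
    (!![a, b; b, d] : Matrix (Fin 2) (Fin 2) ℝ).PosSemidef ↔ 0 ≤ a ∧ 0 ≤ d ∧ b ^ 2 ≤ a * d := by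
  constructor
  · intro h
    have ha := h.diag_nonneg (i := 0)
    have hd := h.diag_nonneg (i := 1)
    have hdet := h.det_nonneg
    simp only [of_apply, cons_val', cons_val_zero, cons_val_fin_one, cons_val_one, det_fin_two_of,
      sub_nonneg] at ha hd hdet
    exact ⟨ha, hd, by nlinarith⟩
  rintro ⟨ha, hd, hb⟩
  refine PosSemidef.of_dotProduct_mulVec_nonneg
    (isHermitian_iff_isSymm.2 (isSymm_fin_two a b d)) fun x => ?_
  have hquad :
      star x ⬝ᵥ (!![a, b; b, d] *ᵥ x) = a * x 0 ^ 2 + 2 * b * x 0 * x 1 + d * x 1 ^ 2 := by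
    simp only [dotProduct, Pi.star_apply, star_trivial, mulVec, of_apply, cons_val',
      cons_val_fin_one, Fin.sum_univ_two, cons_val_zero, cons_val_one]
    ring
  rw [hquad]
  rcases ha.eq_or_lt with rfl | ha
  · obtain rfl : b = 0 := by nlinarith
    nlinarith [sq_nonneg (x 1)]
  · -- `a • (quadratic form) = (a x₀ + b x₁)² + (a d - b²) x₁²`
    nlinarith [sq_nonneg (a * x 0 + b * x 1), sq_nonneg (x 1), mul_nonneg ha.le hd]

lemma eq_one_of_posSemidef_sub_diag {C : Matrix (Fin 2) (Fin 2) ℝ} (hC : C.IsSymm)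
    (hCA : (C - !![1, 0; 0, 0]).PosSemidef) (hCB : (C - !![0, 0; 0, 1]).PosSemidef)
    (hC1 : (1 - C).PosSemidef) : C = 1 := by
  rw [hC.eq_fin_two] at hCA hCB hC1 ⊢
  rw [sub_fin_two, posSemidef_fin_two_iff] at hCA hCB
  rw [one_fin_two, sub_fin_two, posSemidef_fin_two_iff] at hC1
  obtain ⟨ha, -, hb⟩ := hCA
  obtain ⟨-, hd, -⟩ := hCB
  obtain ⟨ha', hd', -⟩ := hC1
  have h00 : C 0 0 = 1 := by linarith
  have h11 : C 1 1 = 1 := by linarith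
  have h01 : C 0 1 = 0 := by
    rw [h00, sub_self, zero_mul, sub_zero] at hb
    exact pow_eq_zero_iff two_ne_zero |>.1 (le_antisymm hb (sq_nonneg _))
  rw [h00, h11, h01, one_fin_two]

theorem stmt_9 :
    ∃ A B : Matrix (Fin 2) (Fin 2) ℝ, A.IsSymm ∧ B.IsSymm ∧
      ¬ ∃ C : Matrix (Fin 2) (Fin 2) ℝ, C.IsSymm ∧
        (C - A).PosSemidef ∧ (C - B).PosSemidef ∧
        (∀ D : Matrix (Fin 2) (Fin 2) ℝ, D.IsSymm →
          (D - A).PosSemidef → (D - B).PosSemidef → (D - C).PosSemidef) := by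
  refine ⟨!![1, 0; 0, 0], !![0, 0; 0, 1], isSymm_fin_two _ _ _, isSymm_fin_two _ _ _, ?_⟩
  rintro ⟨C, hC, hCA, hCB, hleast⟩
  have h1 := hleast 1 isSymm_one
    (by rw [one_fin_two, sub_fin_two, posSemidef_fin_two_iff]; norm_num)
    (by rw [one_fin_two, sub_fin_two, posSemidef_fin_two_iff]; norm_num)
  have hE := hleast !![2, 6 / 5; 6 / 5, 2] (isSymm_fin_two _ _ _)
    (by rw [sub_fin_two, posSemidef_fin_two_iff]; norm_num)
    (by rw [sub_fin_two, posSemidef_fin_two_iff]; norm_num)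
  obtain rfl : C = 1 := eq_one_of_posSemidef_sub_diag hC hCA hCB h1
  rw [one_fin_two, sub_fin_two, posSemidef_fin_two_iff] at hE
  norm_num at hE
end
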